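/- Let A be an associative unital topological ring admitting a compact subset Q with 1 ∈ Q and Q = −Q that generates A as a ring, let X be a Banach space, and let n ≥ 2. Set S = {e_{i,j}(q) : q ∈ Q, 1 ≤ i ≠ j ≤ n} ⊆ E(n,A). Assume that E(n,A) has property (T_X) witnessed by S, i.e.: for every isometric representation ρ of E(n,A) on X there exists ε > 0 such that for every ξ ∈ X, sup_{s ∈ S} dist(ρ(s)ξ − ξ, X₀) ≥ ε · dist(ξ, X₀), where X₀ = {x ∈ X : ρ(γ)x = x for all γ ∈ E(n,A)} and dist denotes the norm-distance in X to the subspace X₀. Then, with G' ≅ E(n,A) ⋉ Aⁿ and H' ≅ Aⁿ realized inside E(n+1,A) as in the context and S' = {e_{i,j}(q) : q ∈ Q, i ≠ j} ∩ G', the pair G' > H' has weak relative property (T_X) with respect to S': for every isometric representation ρ of G' on X there exists ε' > 0 such that sup_{s ∈ S'} ‖ρ(s)ξ − ξ‖ ≥ ε' · sup_{h ∈ H'} ‖ρ(h)ξ − ξ‖ for every ξ ∈ X. -/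

import Mathlib

open Matrix

noncomputable section

abbrev MatA (n : ℕ) (A : Type*) [Ring A] := Matrix (Fin n) (Fin n) A

/-- The elementary matrix `e_{i,j}(a)`: identity with `a` in position `(i,j)`. -/
def elemMat (n : ℕ) (A : Type*) [Ring A] (i j : Fin n) (a : A) : MatA n A :=
  1 + Matrix.single i j a

/-- The elementary group `E(n,A)`: the subgroup of the invertible `n×n` matrices over `A`
generated by the elementary matrices `e_{i,j}(a)`, `i ≠ j`. -/
def elemGrp (n : ℕ) (A : Type*) [Ring A] : Subgroup (MatA n A)ˣ :=
  Subgroup.closure {u | ∃ i j : Fin n, ∃ a : A, i ≠ j ∧ u.val = elemMat n A i j a}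

/-- The copy of `E(n,A) ⋉ Aⁿ` inside `E(n+1,A)`: the subgroup generated by the elementary
matrices `e_{i,j}(a)` with `i ≠ j` and `i ≤ n` (i.e. `i` not the last index). -/
def upperGrp (n : ℕ) (A : Type*) [Ring A] : Subgroup (MatA (n + 1) A)ˣ :=
  Subgroup.closure
    {u | ∃ i j : Fin (n + 1), ∃ a : A, i ≠ j ∧ (i : ℕ) < n ∧
      u.val = elemMat (n + 1) A i j a}

/-- The matrix with identity upper-left `n×n` block, last column `v` above the diagonal
entry `1`, and zero elsewhere. -/
def colMat (n : ℕ) (A : Type*) [Ring A] (v : Fin n → A) : MatA (n + 1) A :=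
  Matrix.of fun i j =>
    (if i = j then 1 else 0) + (if h : (i : ℕ) < n ∧ (j : ℕ) = n then v ⟨i, h.1⟩ else 0)

/-- The copy of `Aⁿ` inside `E(n+1,A)`: matrices with identity upper-left block and
arbitrary last column. -/
def colSet (n : ℕ) (A : Type*) [Ring A] : Set (MatA (n + 1) A)ˣ :=
  {u | ∃ v : Fin n → A, u.val = colMat n A v}


section Aux

variable {m : ℕ} {A : Type*} [Ring A]

lemma stdBasisMatrix_neg (i j : Fin m) (a : A) :
    single i j (-a) = -(single i j a : MatA m A) := by
  ext i' j'
  simp only [single, of_apply, Matrix.neg_apply]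
  split <;> simp

lemma elemMat_mul_of_ne {i j k l : Fin m} (hjk : j ≠ k) (a b : A) :
    elemMat m A i j a * elemMat m A k l b
      = 1 + single i j a + single k l b := by
  simp only [elemMat, add_mul, mul_add, one_mul, mul_one,
    Matrix.single_mul_single_of_ne (c := a) i j _ hjk]
  abel

lemma elemMat_mul_same {i l : Fin m} (j : Fin m) (a b : A) :
    elemMat m A i j a * elemMat m A j l b
      = 1 + single i j a + single j l b + single i l (a * b) := by
  simp only [elemMat, add_mul, mul_add, one_mul, mul_one,
    Matrix.single_mul_single_same]
  abel

lemma elemMat_mul_neg_self {i j : Fin m} (hij : i ≠ j) (a : A) :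
    elemMat m A i j a * elemMat m A i j (-a) = 1 := by
  rw [elemMat_mul_of_ne hij.symm, stdBasisMatrix_neg]
  abel

def elemUnit (i j : Fin m) (hij : i ≠ j) (a : A) : (MatA m A)ˣ where
  val := elemMat m A i j a
  inv := elemMat m A i j (-a)
  val_inv := elemMat_mul_neg_self hij a
  inv_val := by simpa using elemMat_mul_neg_self hij (-a)

lemma elemMat_conj {i j k : Fin m} (hij : i ≠ j) (hjk : j ≠ k) (hik : i ≠ k) (a b : A) :
    elemMat m A i j a * elemMat m A j k b * elemMat m A i j (-a)
      = elemMat m A i k (a * b) * elemMat m A j k b := by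
  rw [elemMat_mul_same, elemMat_mul_of_ne hjk.symm]
  simp only [elemMat, mul_add, mul_one, add_mul, one_mul,
    Matrix.single_mul_single_of_ne _ _ _ _ hij.symm,
    Matrix.single_mul_single_of_ne _ _ _ _ hik.symm]
  rw [stdBasisMatrix_neg]
  abel

end Aux
section Emb

variable {n : ℕ} {A : Type*} [Ring A]

def embMat (M : MatA n A) : MatA (n + 1) A :=
  Matrix.of fun i j =>
    if h : (i : ℕ) < n ∧ (j : ℕ) < n then M ⟨i, h.1⟩ ⟨j, h.2⟩ else if i = j then 1 else 0

@[simp] lemma embMat_castSucc (M : MatA n A) (i j : Fin n) :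
    embMat M i.castSucc j.castSucc = M i j := by
  rw [embMat, Matrix.of_apply, dif_pos ⟨i.isLt, j.isLt⟩]
  exact congrArg₂ M (by ext; simp) (by ext; simp)

@[simp] lemma embMat_last_last (M : MatA n A) :
    embMat M (Fin.last n) (Fin.last n) = 1 := by
  rw [embMat, Matrix.of_apply, dif_neg (by simp), if_pos rfl]

@[simp] lemma embMat_castSucc_last (M : MatA n A) (i : Fin n) :
    embMat M i.castSucc (Fin.last n) = 0 := by
  rw [embMat, Matrix.of_apply, dif_neg (by simp), if_neg (Fin.castSucc_lt_last i).ne]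

@[simp] lemma embMat_last_castSucc (M : MatA n A) (j : Fin n) :
    embMat M (Fin.last n) j.castSucc = 0 := by
  rw [embMat, Matrix.of_apply, dif_neg (by simp), if_neg (Fin.castSucc_lt_last j).ne']

def embHom (n : ℕ) (A : Type*) [Ring A] : MatA n A →* MatA (n + 1) A where
  toFun := embMat
  map_one' := by
    ext i j
    induction i using Fin.lastCases with
    | last =>
      induction j using Fin.lastCases with
      | last => simp [Matrix.one_apply]
      | cast j => simp [Matrix.one_apply, (Fin.castSucc_lt_last j).ne']
    | cast i =>
      induction j using Fin.lastCases with
      | last => simp [Matrix.one_apply, (Fin.castSucc_lt_last i).ne]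
      | cast j => simp [Matrix.one_apply, Fin.castSucc_inj]
  map_mul' := by
    intro M N
    ext i j
    induction i using Fin.lastCases with
    | last =>
      induction j using Fin.lastCases with
      | last => simp [Matrix.mul_apply, Fin.sum_univ_castSucc]
      | cast j => simp [Matrix.mul_apply, Fin.sum_univ_castSucc]
    | cast i =>
      induction j using Fin.lastCases with
      | last => simp [Matrix.mul_apply, Fin.sum_univ_castSucc]
      | cast j => simp [Matrix.mul_apply, Fin.sum_univ_castSucc]

lemma embMat_elemMat (i j : Fin n) (a : A) :
    embMat (elemMat n A i j a) = elemMat (n + 1) A i.castSucc j.castSucc a := by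
  ext i' j'
  induction i' using Fin.lastCases with
  | last =>
    induction j' using Fin.lastCases with
    | last =>
      simp [elemMat, Matrix.add_apply, Matrix.one_apply, (Fin.castSucc_lt_last i).ne]
    | cast j' =>
      simp [elemMat, Matrix.add_apply, Matrix.one_apply, (Fin.castSucc_lt_last j').ne',
        (Fin.castSucc_lt_last i).ne]
  | cast i' =>
    induction j' using Fin.lastCases with
    | last =>
      simp [elemMat, Matrix.add_apply, Matrix.one_apply, (Fin.castSucc_lt_last i').ne,
        (Fin.castSucc_lt_last j).ne]
    | cast j' =>
      simp [elemMat, Matrix.add_apply, Matrix.one_apply, Fin.castSucc_inj,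
        Matrix.single, Matrix.of_apply]

lemma continuous_embMat [TopologicalSpace A] :
    Continuous (embMat : MatA n A → MatA (n + 1) A) := by
  apply continuous_matrix
  intro i j
  by_cases h : (i : ℕ) < n ∧ (j : ℕ) < n
  · simp only [embMat, Matrix.of_apply, dif_pos h]
    exact continuous_id.matrix_elem _ _
  · simp only [embMat, Matrix.of_apply, dif_neg h]
    exact continuous_const

end Emb
section Emb2

variable (n : ℕ) (A : Type*) [Ring A]

def embUnits : (MatA n A)ˣ →* (MatA (n + 1) A)ˣ := Units.map (embHom n A)

variable {n A}

lemma embUnits_mem {u : (MatA n A)ˣ} (hu : u ∈ elemGrp n A) :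
    embUnits n A u ∈ upperGrp n A := by
  induction hu using Subgroup.closure_induction with
  | mem x hx =>
    obtain ⟨i, j, a, hij, hx⟩ := hx
    apply Subgroup.subset_closure
    refine ⟨i.castSucc, j.castSucc, a, by simpa [Fin.castSucc_inj] using hij, by simp, ?_⟩
    show embMat x.val = _
    rw [hx, embMat_elemMat]
  | one => rw [_root_.map_one]; exact (upperGrp n A).one_mem
  | mul x y _ _ hx hy => rw [_root_.map_mul]; exact mul_mem hx hy
  | inv x _ hx => rw [_root_.map_inv]; exact inv_mem hx

variable (n A)

def embSub : ↥(elemGrp n A) →* ↥(upperGrp n A) :=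
  ((embUnits n A).comp (elemGrp n A).subtype).codRestrict (upperGrp n A)
    fun γ => embUnits_mem γ.2

lemma continuous_embSub [TopologicalSpace A] [IsTopologicalRing A] :
    Continuous (embSub n A) := by
  apply Continuous.subtype_mk
  apply Units.continuous_iff.mpr
  constructor
  · exact continuous_embMat.comp (Units.continuous_val.comp continuous_subtype_val)
  · exact continuous_embMat.comp (Units.continuous_coe_inv.comp continuous_subtype_val)

end Emb2

section Col

variable {n : ℕ} {A : Type*} [Ring A]

lemma stdBasis_mul_sum_zero (i : Fin n) (a : A) (v : Fin n → A) (l : List (Fin n)) :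
    (single i.castSucc (Fin.last n) a : MatA (n + 1) A) *
      (l.map fun k => (single k.castSucc (Fin.last n) (v k) : MatA (n + 1) A)).sum
      = 0 := by
  induction l with
  | nil => simp
  | cons k l ih =>
    rw [List.map_cons, List.sum_cons, mul_add, ih,
      Matrix.single_mul_single_of_ne _ _ _ _ (Fin.castSucc_lt_last k).ne', add_zero]

lemma prod_elemMat_col (v : Fin n → A) (l : List (Fin n)) :
    (l.map fun k => elemMat (n + 1) A k.castSucc (Fin.last n) (v k)).prod
      = 1 + (l.map fun k =>
          (single k.castSucc (Fin.last n) (v k) : MatA (n + 1) A)).sum := by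
  induction l with
  | nil => simp
  | cons k l ih =>
    rw [List.map_cons, List.prod_cons, ih, List.map_cons, List.sum_cons]
    nth_rewrite 1 [elemMat]
    rw [add_mul, one_mul, mul_add, mul_one, stdBasis_mul_sum_zero]
    abel

lemma col_eq (v : Fin n → A) :
    colMat n A v = 1 + ((List.finRange n).map fun k =>
      (single k.castSucc (Fin.last n) (v k) : MatA (n + 1) A)).sum := by
  rw [show ((List.finRange n).map fun k =>
      (single k.castSucc (Fin.last n) (v k) : MatA (n + 1) A)).sum
      = ∑ k : Fin n, single k.castSucc (Fin.last n) (v k) from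
      (Fin.sum_univ_def _).symm]
  ext i j
  rw [Matrix.add_apply, Matrix.one_apply, Matrix.sum_apply, colMat, Matrix.of_apply]
  congr 1
  by_cases hj : (j : ℕ) = n
  · have hjl : j = Fin.last n := Fin.ext hj
    subst hjl
    by_cases hi : (i : ℕ) < n
    · rw [dif_pos ⟨hi, rfl⟩]
      rw [Finset.sum_eq_single (⟨i, hi⟩ : Fin n)]
      · rw [show (⟨(i:ℕ), hi⟩ : Fin n).castSucc = i from Fin.ext (by simp)]
        simp
      · intro k _ hk
        apply Matrix.single_apply_of_ne
        rintro ⟨hk1, -⟩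
        exact hk (Fin.ext (by simpa [Fin.ext_iff] using hk1))
      · simp
    · rw [dif_neg (by tauto)]
      refine (Finset.sum_eq_zero fun k _ => ?_).symm
      apply Matrix.single_apply_of_ne
      rintro ⟨hk1, -⟩
      exact hi (by simpa [Fin.ext_iff] using congrArg Fin.val hk1 ▸ k.isLt)
  · rw [dif_neg (by tauto)]
    refine (Finset.sum_eq_zero fun k _ => ?_).symm
    apply Matrix.single_apply_of_ne
    rintro ⟨-, hk2⟩
    exact hj (by simpa [Fin.ext_iff] using hk2.symm)

def colUnit (n : ℕ) (A : Type*) [Ring A] (i : Fin n) (a : A) : ↥(upperGrp n A) :=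
  ⟨elemUnit i.castSucc (Fin.last n) (Fin.castSucc_lt_last i).ne a,
   Subgroup.subset_closure ⟨_, _, a, (Fin.castSucc_lt_last i).ne, by simp, rfl⟩⟩

def blkUnit (n : ℕ) (A : Type*) [Ring A] (i j : Fin n) (h : i ≠ j) (a : A) :
    ↥(upperGrp n A) :=
  ⟨elemUnit i.castSucc j.castSucc (by simpa [Fin.castSucc_inj] using h) a,
   Subgroup.subset_closure ⟨_, _, a, by simpa [Fin.castSucc_inj] using h, by simp, rfl⟩⟩

lemma blk_conj (i j : Fin n) (h : i ≠ j) (a b : A) :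
    blkUnit n A i j h a * colUnit n A j b * (blkUnit n A i j h a)⁻¹
      = colUnit n A i (a * b) * colUnit n A j b := by
  apply Subtype.ext
  apply Units.ext
  show elemMat (n + 1) A i.castSucc j.castSucc a
      * elemMat (n + 1) A j.castSucc (Fin.last n) b
      * elemMat (n + 1) A i.castSucc j.castSucc (-a)
    = elemMat (n + 1) A i.castSucc (Fin.last n) (a * b)
      * elemMat (n + 1) A j.castSucc (Fin.last n) b
  exact elemMat_conj (by simpa [Fin.castSucc_inj] using h)
    (Fin.castSucc_lt_last j).ne (Fin.castSucc_lt_last i).ne a b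

lemma colUnit_prod (v : Fin n → A) :
    ((((List.finRange n).map fun i => colUnit n A i (v i)).prod).val
        : (MatA (n + 1) A)ˣ).val = colMat n A v := by
  have h1 : ((((List.finRange n).map fun i => colUnit n A i (v i)).prod).val
        : (MatA (n + 1) A)ˣ).val
      = ((List.finRange n).map fun i =>
          elemMat (n + 1) A i.castSucc (Fin.last n) (v i)).prod := by
    let f : ↥(upperGrp n A) →* MatA (n + 1) A :=
      (Units.coeHom (MatA (n + 1) A)).comp (upperGrp n A).subtype
    have := map_list_prod f ((List.finRange n).map fun i => colUnit n A i (v i))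
    exact this.trans (by rw [List.map_map]; rfl)
  rw [h1, prod_elemMat_col, ← col_eq]

lemma norm_rho_prod {X : Type*} [NormedAddCommGroup X] [NormedSpace ℝ X]
    {G : Type*} [Group G] (ρ : G →* (X ≃ₗᵢ[ℝ] X)) (η : X) :
    ∀ l : List G, ‖ρ l.prod η - η‖ ≤ (l.map fun g => ‖ρ g η - η‖).sum := by
  intro l
  induction l with
  | nil => simp
  | cons g l ih =>
    rw [List.prod_cons, List.map_cons, List.sum_cons, _root_.map_mul]
    have h1 : (ρ g * ρ l.prod) η - η = (ρ g (ρ l.prod η) - ρ g η) + (ρ g η - η) := by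
      rw [LinearIsometryEquiv.coe_mul]; simp only [Function.comp_apply]; abel
    rw [h1]
    refine (norm_add_le _ _).trans ?_
    have h2 : ‖ρ g (ρ l.prod η) - ρ g η‖ = ‖ρ l.prod η - η‖ := by
      rw [← map_sub, LinearIsometryEquiv.norm_map]
    rw [h2]
    linarith

end Col

/-- Lemma 5.6 (`easy`): if `E(n,A)` has property (T_X) (witnessed by the compact elementary
generating set coming from `Q`), then the pair `E(n,A) ⋉ Aⁿ > Aⁿ` (realized inside
`E(n+1,A)`) has weak relative property (T_X). -/
theorem stmt18 (A : Type*) [Ring A] [TopologicalSpace A] [IsTopologicalRing A]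
    (Q : Set A) (hQcompact : IsCompact Q) (hQ1 : (1 : A) ∈ Q) (hQsym : Q = -Q)
    (hQgen : Subring.closure Q = ⊤)
    (X : Type*) [NormedAddCommGroup X] [NormedSpace ℝ X] [CompleteSpace X]
    (n : ℕ) (hn : 2 ≤ n)
    (hT : ∀ (ρ : ↥(elemGrp n A) →* (X ≃ₗᵢ[ℝ] X)), (∀ x : X, Continuous fun γ => ρ γ x) →
      ∃ ε : ℝ, 0 < ε ∧ ∀ (ξ : X) (b : ℝ),
        (∀ s : ↥(elemGrp n A),
          (∃ (i j : Fin n) (q : A), i ≠ j ∧ q ∈ Q ∧ s.val.val = elemMat n A i j q) →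
          Metric.infDist (ρ s ξ - ξ) {x : X | ∀ γ : ↥(elemGrp n A), ρ γ x = x} ≤ b) →
        ε * Metric.infDist ξ {x : X | ∀ γ : ↥(elemGrp n A), ρ γ x = x} ≤ b) :
    ∀ (ρ : ↥(upperGrp n A) →* (X ≃ₗᵢ[ℝ] X)), (∀ x : X, Continuous fun g => ρ g x) →
      ∃ ε : ℝ, 0 < ε ∧ ∀ (ξ : X) (b : ℝ),
        (∀ s : ↥(upperGrp n A),
          (∃ (i j : Fin (n + 1)) (q : A), i ≠ j ∧ q ∈ Q ∧
            s.val.val = elemMat (n + 1) A i j q) →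
          ‖ρ s ξ - ξ‖ ≤ b) →
        ∀ h : ↥(upperGrp n A), h.val ∈ colSet n A → ε * ‖ρ h ξ - ξ‖ ≤ b := by
  intro ρ hcont
  have hcont' : ∀ x : X, Continuous fun γ => (ρ.comp (embSub n A)) γ x :=
    fun x => (hcont x).comp (continuous_embSub n A)
  obtain ⟨ε, hε, hTa⟩ := hT (ρ.comp (embSub n A)) hcont'
  set X₀ : Set X :=
    {x : X | ∀ γ : ↥(elemGrp n A), (ρ.comp (embSub n A)) γ x = x} with hX₀def
  have h0 : (0 : X) ∈ X₀ := fun γ => map_zero _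
  refine ⟨1 / ((2 + 4 * (n : ℝ)) / ε + 2 * (n : ℝ)), by positivity, ?_⟩
  intro ξ b hS h hcol
  set C : ℝ := (2 + 4 * (n : ℝ)) / ε + 2 * (n : ℝ) with hCdef
  have hC : 0 < C := by rw [hCdef]; positivity
  clear_value C
  -- cancellation helper
  have hcancel : ∀ (g : ↥(upperGrp n A)) (x : X), ρ g⁻¹ (ρ g x) = x := by
    intro g x
    rw [_root_.map_inv, LinearIsometryEquiv.coe_inv]
    exact (ρ g).symm_apply_apply x
  -- E(n,A)-fixed vectors are fixed by the block units
  have hfix : ∀ η ∈ X₀, ∀ (i j : Fin n) (hij : i ≠ j) (a : A),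
      ρ (blkUnit n A i j hij a) η = η := by
    intro η hη i j hij a
    have hmem : elemUnit i j hij a ∈ elemGrp n A :=
      Subgroup.subset_closure ⟨i, j, a, hij, rfl⟩
    have heq : blkUnit n A i j hij a = embSub n A ⟨elemUnit i j hij a, hmem⟩ := by
      apply Subtype.ext; apply Units.ext
      show elemMat (n + 1) A i.castSucc j.castSucc a = embMat (elemMat n A i j a)
      rw [embMat_elemMat]
    rw [heq]
    exact hη ⟨elemUnit i j hij a, hmem⟩
  -- bounds coming from the hypothesis on S'
  have hb_col1 : ∀ j : Fin n, ‖ρ (colUnit n A j 1) ξ - ξ‖ ≤ b := fun j =>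
    hS _ ⟨j.castSucc, Fin.last n, 1, (Fin.castSucc_lt_last j).ne, hQ1, rfl⟩
  have hb0 : 0 ≤ b :=
    le_trans (norm_nonneg _) (hb_col1 ⟨0, by omega⟩)
  -- property (T) bound on the distance to the fixed space
  have hinf : ε * Metric.infDist ξ X₀ ≤ b := by
    apply hTa ξ b
    rintro s ⟨i, j, q, hij, hq, hs⟩
    have hij' : i.castSucc ≠ j.castSucc := by simpa [Fin.castSucc_inj] using hij
    have hemb : embSub n A s = blkUnit n A i j hij q := by
      apply Subtype.ext; apply Units.ext
      show embMat s.val.val = elemMat (n + 1) A i.castSucc j.castSucc q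
      rw [hs, embMat_elemMat]
    have heq : (ρ.comp (embSub n A)) s = ρ (blkUnit n A i j hij q) := by
      rw [MonoidHom.comp_apply, hemb]
    refine le_trans (Metric.infDist_le_dist_of_mem h0) ?_
    rw [dist_zero_right, heq]
    exact hS _ ⟨i.castSucc, j.castSucc, q, hij', hq, rfl⟩
  -- estimate for fixed vectors
  have hηest : ∀ η ∈ X₀, ∀ (i : Fin n) (a : A),
      ‖ρ (colUnit n A i a) η - η‖ ≤ 2 * (b + 2 * ‖ξ - η‖) := by
    intro η hη i a
    have : Nontrivial (Fin n) := Fin.nontrivial_iff_two_le.mpr hn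
    obtain ⟨j, hj⟩ := exists_ne i
    have hij' : i ≠ j := hj.symm
    have hbase : ‖ρ (colUnit n A j 1) η - η‖ ≤ b + 2 * ‖ξ - η‖ := by
      have h1 := hb_col1 j
      have h2 : ρ (colUnit n A j 1) η - η
          = (ρ (colUnit n A j 1) η - ρ (colUnit n A j 1) ξ)
            + (ρ (colUnit n A j 1) ξ - ξ) + (ξ - η) := by abel
      have h3 : ‖ρ (colUnit n A j 1) η - ρ (colUnit n A j 1) ξ‖ = ‖ξ - η‖ := by
        rw [← map_sub, LinearIsometryEquiv.norm_map, norm_sub_rev]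
      rw [h2]
      refine le_trans (norm_add_le _ _) ?_
      refine le_trans (add_le_add_left (norm_add_le _ _) _) ?_
      rw [h3]; linarith
    have hkey : ‖ρ (colUnit n A i (a * 1)) η - η‖
        ≤ 2 * ‖ρ (colUnit n A j 1) η - η‖ := by
      have hfixP : ρ (blkUnit n A i j hij' a) η = η := hfix η hη i j hij' a
      have hfixPinv : ρ (blkUnit n A i j hij' a)⁻¹ η = η := by
        conv_lhs => rw [← hfixP]
        exact hcancel _ _
      have hid : colUnit n A i (a * 1) * colUnit n A j 1
          = blkUnit n A i j hij' a * colUnit n A j 1 * (blkUnit n A i j hij' a)⁻¹ :=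
        (blk_conj i j hij' a 1).symm
      have e1 : ρ (colUnit n A i (a * 1) * colUnit n A j 1) η
          = ρ (blkUnit n A i j hij' a) (ρ (colUnit n A j 1) η) := by
        rw [hid, _root_.map_mul, _root_.map_mul, LinearIsometryEquiv.coe_mul,
          LinearIsometryEquiv.coe_mul]
        simp only [Function.comp_apply]
        rw [hfixPinv]
      have e2 : ρ (colUnit n A i (a * 1) * colUnit n A j 1) η
          = ρ (colUnit n A i (a * 1)) (ρ (colUnit n A j 1) η) := by
        rw [_root_.map_mul, LinearIsometryEquiv.coe_mul]; rfl
      have h2 : ρ (colUnit n A i (a * 1)) η - η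
          = (ρ (colUnit n A i (a * 1)) η
              - ρ (colUnit n A i (a * 1)) (ρ (colUnit n A j 1) η))
            + (ρ (blkUnit n A i j hij' a) (ρ (colUnit n A j 1) η)
              - ρ (blkUnit n A i j hij' a) η) := by
        rw [hfixP, ← e1, e2]; abel
      have h3 : ‖ρ (colUnit n A i (a * 1)) η
          - ρ (colUnit n A i (a * 1)) (ρ (colUnit n A j 1) η)‖
          = ‖ρ (colUnit n A j 1) η - η‖ := by
        rw [← map_sub, LinearIsometryEquiv.norm_map, norm_sub_rev]
      have h4 : ‖ρ (blkUnit n A i j hij' a) (ρ (colUnit n A j 1) η)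
          - ρ (blkUnit n A i j hij' a) η‖ = ‖ρ (colUnit n A j 1) η - η‖ := by
        rw [← map_sub, LinearIsometryEquiv.norm_map]
      rw [h2]
      refine le_trans (norm_add_le _ _) ?_
      rw [h3, h4]; linarith
    calc ‖ρ (colUnit n A i a) η - η‖
        = ‖ρ (colUnit n A i (a * 1)) η - η‖ := by rw [mul_one]
      _ ≤ 2 * ‖ρ (colUnit n A j 1) η - η‖ := hkey
      _ ≤ 2 * (b + 2 * ‖ξ - η‖) := by linarith
  -- decompose h into a product of column units
  obtain ⟨v, hv⟩ := hcol
  have hP : h = ((List.finRange n).map fun i => colUnit n A i (v i)).prod := by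
    apply Subtype.ext; apply Units.ext
    rw [colUnit_prod]
    exact hv
  -- main estimate
  have main : ∀ η ∈ X₀,
      ‖ρ h ξ - ξ‖ ≤ (2 + 4 * (n : ℝ)) * ‖ξ - η‖ + 2 * (n : ℝ) * b := by
    intro η hη
    have hprod : ‖ρ h η - η‖ ≤ (n : ℝ) * (2 * (b + 2 * ‖ξ - η‖)) := by
      rw [hP]
      refine le_trans (norm_rho_prod ρ η _) ?_
      have hlist : ∀ x ∈ (((List.finRange n).map fun i => colUnit n A i (v i)).map
          fun g => ‖ρ g η - η‖), x ≤ 2 * (b + 2 * ‖ξ - η‖) := by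
        intro x hx
        rw [List.mem_map] at hx; obtain ⟨g, hg, rfl⟩ := hx
        rw [List.mem_map] at hg; obtain ⟨i, _, rfl⟩ := hg
        exact hηest η hη i (v i)
      have := List.sum_le_card_nsmul _ _ hlist
      simpa [List.length_map, List.length_finRange, nsmul_eq_mul] using this
    have htri : ‖ρ h ξ - ξ‖ ≤ 2 * ‖ξ - η‖ + ‖ρ h η - η‖ := by
      have h2 : ρ h ξ - ξ = (ρ h ξ - ρ h η) + (ρ h η - η) + (η - ξ) := by abel
      have h3 : ‖ρ h ξ - ρ h η‖ = ‖ξ - η‖ := by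
        rw [← map_sub, LinearIsometryEquiv.norm_map]
      rw [h2]
      refine le_trans (norm_add_le _ _) ?_
      refine le_trans (add_le_add_left (norm_add_le _ _) _) ?_
      rw [h3, norm_sub_rev η ξ]; linarith
    have hexp : (n : ℝ) * (2 * (b + 2 * ‖ξ - η‖))
        = 2 * (n : ℝ) * b + 4 * (n : ℝ) * ‖ξ - η‖ := by ring
    linarith
  -- conclude
  have hfin : ‖ρ h ξ - ξ‖ ≤ C * b := by
    have hpos : (0 : ℝ) < 2 + 4 * (n : ℝ) := by positivity
    have key : ∀ δ : ℝ, 0 < δ → ‖ρ h ξ - ξ‖ ≤ C * b + (2 + 4 * (n : ℝ)) * δ := by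
      intro δ hδ
      have hle : Metric.infDist ξ X₀ ≤ b / ε := by
        rw [le_div_iff₀ hε, mul_comm]; exact hinf
      have hlt : Metric.infDist ξ X₀ < b / ε + δ := by linarith
      obtain ⟨η, hηmem, hηd⟩ := (Metric.infDist_lt_iff ⟨0, h0⟩).1 hlt
      have hξη : ‖ξ - η‖ < b / ε + δ := by rwa [dist_eq_norm] at hηd
      have hmain := main η hηmem
      have hCb : (2 + 4 * (n : ℝ)) * (b / ε) + 2 * (n : ℝ) * b = C * b := by
        rw [hCdef]; field_simp
      have hmul : (2 + 4 * (n : ℝ)) * ‖ξ - η‖ ≤ (2 + 4 * (n : ℝ)) * (b / ε + δ) :=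
        mul_le_mul_of_nonneg_left hξη.le hpos.le
      have hdistrib : (2 + 4 * (n : ℝ)) * (b / ε + δ)
          = (2 + 4 * (n : ℝ)) * (b / ε) + (2 + 4 * (n : ℝ)) * δ := by ring
      linarith
    apply le_of_forall_pos_le_add
    intro δ' hδ'
    have h5 := key (δ' / (2 + 4 * (n : ℝ))) (by positivity)
    have h6 : (2 + 4 * (n : ℝ)) * (δ' / (2 + 4 * (n : ℝ))) = δ' := by field_simp
    rw [h6] at h5
    linarith
  have h1C : (0 : ℝ) < 1 / C := by positivity
  calc (1 / C) * ‖ρ h ξ - ξ‖ ≤ (1 / C) * (C * b) :=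
        mul_le_mul_of_nonneg_left hfin (le_of_lt h1C)
    _ = b := by field_simp
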